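/- If G : X → X ∨ B is a g-coaction and ν is the suspension comultiplication on ΣX, then λ' ∘ (ΣG) ≃ (id ∨ Σg) ∘ ν : ΣX → ΣX ∨ ΣB, where λ' : Σ(X ∨ B) → ΣX ∨ ΣB is the canonical homeomorphism. Consequently, if G' is a g'-coaction with Σg ≃ Σg', then ΣG ≃ ΣG'. -/

import Mathlib

open ContinuousMap unitInterval

/-- The relation generating the reduced suspension of `(X, x₀)`:
collapse `X × {0}`, `X × {1}` and `{x₀} × I`. -/
inductive SuspRel (X : Type*) (x₀ : X) : X × I → X × I → Prop
  | zero (x y : X) : SuspRel X x₀ (x, 0) (y, 0)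
  | one (x y : X) : SuspRel X x₀ (x, 1) (y, 1)
  | base (t : I) : SuspRel X x₀ (x₀, t) (x₀, 0)

/-- The reduced suspension `ΣX`. -/
def Susp (X : Type*) [TopologicalSpace X] (x₀ : X) : Type _ := Quot (SuspRel X x₀)

instance {X : Type*} [TopologicalSpace X] (x₀ : X) : TopologicalSpace (Susp X x₀) :=
  inferInstanceAs (TopologicalSpace (Quot (SuspRel X x₀)))

/-- Points of the suspension. -/
def Susp.mk {X : Type*} [TopologicalSpace X] (x₀ : X) (x : X) (t : I) : Susp X x₀ :=
  Quot.mk _ (x, t)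

/-- The basepoint of the suspension. -/
def Susp.pt {X : Type*} [TopologicalSpace X] (x₀ : X) : Susp X x₀ := Susp.mk x₀ x₀ 0

/-- Clamp a real number into the unit interval. -/
noncomputable def toI (r : ℝ) : I := Set.projIcc 0 1 zero_le_one r
open ContinuousMap

/-- The wedge `X ∨ B`, modeled as the subspace `(X × {b₀}) ∪ ({x₀} × B)` of `X × B`. -/
def Wedge (X B : Type*) [TopologicalSpace X] [TopologicalSpace B] (x₀ : X) (b₀ : B) :=
  {z : X × B // z.1 = x₀ ∨ z.2 = b₀}

variable {X B : Type*} [TopologicalSpace X] [TopologicalSpace B] {x₀ : X} {b₀ : B}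

instance : TopologicalSpace (Wedge X B x₀ b₀) :=
  inferInstanceAs (TopologicalSpace {z : X × B // z.1 = x₀ ∨ z.2 = b₀})

namespace Wedge

/-- The basepoint of the wedge. -/
def pt : Wedge X B x₀ b₀ := ⟨(x₀, b₀), Or.inl rfl⟩

/-- Inclusion of the first wedge summand. -/
def inl : C(X, Wedge X B x₀ b₀) :=
  ⟨fun x => ⟨(x, b₀), Or.inr rfl⟩, by fun_prop⟩

/-- Inclusion of the second wedge summand. -/
def inr : C(B, Wedge X B x₀ b₀) :=
  ⟨fun b => ⟨(x₀, b), Or.inl rfl⟩, by fun_prop⟩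

/-- Projection of the wedge onto the first summand (collapse `B`). -/
def p₁ : C(Wedge X B x₀ b₀, X) := ⟨fun z => z.1.1, by fun_prop⟩

/-- Projection of the wedge onto the second summand (collapse `X`). -/
def p₂ : C(Wedge X B x₀ b₀, B) := ⟨fun z => z.1.2, by fun_prop⟩

/-- Inclusion of the wedge into the product. -/
def J : C(Wedge X B x₀ b₀, X × B) := ⟨Subtype.val, continuous_subtype_val⟩

end Wedge

def IsCoaction {X B : Type*} [TopologicalSpace X] [TopologicalSpace B] (x₀ : X) (b₀ : B)
    (G : C(X, Wedge X B x₀ b₀)) (g : C(X, B)) : Prop :=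
  (Wedge.p₁.comp G).HomotopicRel (ContinuousMap.id X) {x₀} ∧
  (Wedge.p₂.comp G).HomotopicRel g {x₀}


/-! ### Auxiliary machinery for `susp_coaction` -/

section SuspAux

variable {Y Z : Type*} [TopologicalSpace Y] [TopologicalSpace Z] (y₀ : Y)

lemma Susp.mk_zero_pt (y : Y) : Susp.mk y₀ y 0 = Susp.pt y₀ :=
  Quot.sound (SuspRel.zero y y₀)

lemma Susp.mk_one_pt (y : Y) : Susp.mk y₀ y 1 = Susp.pt y₀ :=
  (Quot.sound (SuspRel.one y y₀)).trans (Quot.sound (SuspRel.base 1))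

lemma Susp.mk_base_pt (t : I) : Susp.mk y₀ y₀ t = Susp.pt y₀ :=
  Quot.sound (SuspRel.base t)

/-- If two interior levels of the same slice agree in the suspension, the slice point is the
basepoint. -/
lemma Susp.eq_base_of_mk_eq {y : Y} {t t' : I} (h0 : (t : ℝ) ≠ 0) (h1 : (t : ℝ) ≠ 1)
    (h0' : (t' : ℝ) ≠ 0) (h1' : (t' : ℝ) ≠ 1) (htt' : (t : ℝ) ≠ (t' : ℝ))
    (h : Susp.mk y₀ y t = Susp.mk y₀ y t') : y = y₀ := by
  classical
  by_contra hy
  set f : Y × I → ℝ := fun p => if p.1 = y₀ ∨ (p.2 : ℝ) = 0 ∨ (p.2 : ℝ) = 1 then 2 else (p.2 : ℝ)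
    with hf
  have hinv : ∀ p q : Y × I, SuspRel Y y₀ p q → f p = f q := by
    rintro p q (⟨x, y'⟩ | ⟨x, y'⟩ | ⟨s⟩) <;> simp [hf]
  have := congrArg (Quot.lift f hinv) h
  simp only [Susp.mk, hf] at this
  rw [if_neg (by push_neg; exact ⟨hy, h0, h1⟩), if_neg (by push_neg; exact ⟨hy, h0', h1'⟩)] at this
  exact htt' this

/-- Descend a homotopy-shaped map on `I × (Y × I)` to `I × Susp Y y₀`. -/
noncomputable def suspDescend (h : C(I × (Y × I), Z))
    (hinv : ∀ (s : I) (p q : Y × I), SuspRel Y y₀ p q → h (s, p) = h (s, q)) :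
    C(I × Susp Y y₀, Z) where
  toFun := fun p => Quot.lift (fun q => h (p.1, q)) (fun a b r => hinv p.1 a b r) p.2
  continuous_toFun := by
    have hm : Continuous (fun q : (Y × I) × I => h (q.2, q.1)) :=
      h.continuous.comp (continuous_snd.prodMk continuous_fst)
    have hφ : Continuous (Quot.lift (⇑(ContinuousMap.curry ⟨_, hm⟩))
        (fun p q hr => ContinuousMap.ext fun s => hinv s p q hr) : Susp Y y₀ → C(I, Z)) :=
      isQuotientMap_quot_mk.continuous_iff.mpr (ContinuousMap.curry ⟨_, hm⟩).continuous
    have hcont : Continuous (Function.uncurry fun (z : Susp Y y₀) (s : I) =>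
        (Quot.lift (⇑(ContinuousMap.curry ⟨_, hm⟩))
          (fun p q hr => ContinuousMap.ext fun s => hinv s p q hr) z : C(I, Z)) s) :=
      ContinuousMap.continuous_uncurry_of_continuous ⟨_, hφ⟩
    have h2 : Continuous fun p : I × Susp Y y₀ =>
        (Quot.lift (⇑(ContinuousMap.curry ⟨_, hm⟩))
          (fun p q hr => ContinuousMap.ext fun s => hinv s p q hr) p.2 : C(I, Z)) p.1 :=
      hcont.comp (continuous_snd.prodMk continuous_fst)
    convert h2 using 1
    funext p
    obtain ⟨s, z⟩ := p
    induction z using Quot.ind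
    rfl

lemma suspDescend_mk (h : C(I × (Y × I), Z))
    (hinv : ∀ (s : I) (p q : Y × I), SuspRel Y y₀ p q → h (s, p) = h (s, q))
    (s : I) (p : Y × I) : suspDescend y₀ h hinv (s, Quot.mk _ p) = h (s, p) := rfl

lemma toI_coe (t : I) : toI (t : ℝ) = t := Set.projIcc_val zero_le_one t

lemma toI_nonpos {r : ℝ} (hr : r ≤ 0) : toI r = 0 := by
  rw [toI, Set.projIcc_of_le_left _ hr]; rfl

lemma toI_ge_one {r : ℝ} (hr : 1 ≤ r) : toI r = 1 := by
  rw [toI, Set.projIcc_of_right_le _ hr]; rfl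

lemma toI_zero : toI 0 = 0 := toI_nonpos le_rfl

lemma toI_one : toI 1 = 1 := toI_ge_one le_rfl

lemma continuous_toI : Continuous toI := by
  unfold toI; exact continuous_projIcc

end SuspAux

section WedgeAux

variable {X B : Type*} [TopologicalSpace X] [TopologicalSpace B] {x₀ : X} {b₀ : B}

lemma Wedge.inl_base : (Wedge.inl : C(X, Wedge X B x₀ b₀)) x₀ = Wedge.pt :=
  Subtype.ext rfl

lemma Wedge.inr_base : (Wedge.inr : C(B, Wedge X B x₀ b₀)) b₀ = Wedge.pt :=
  Subtype.ext rfl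

/-- The underlying function of the "pinch with `u` on the bottom and `v` on the top" map. -/
noncomputable def pinchFun (u : C(X, X)) (v : C(X, B)) :
    X × I → Susp (Wedge X B x₀ b₀) Wedge.pt := fun p =>
  if (p.2 : ℝ) ≤ 1 / 2 then Susp.mk Wedge.pt (Wedge.inl (u p.1)) (toI (2 * (p.2 : ℝ)))
  else Susp.mk Wedge.pt (Wedge.inr (v p.1)) (toI (2 * (p.2 : ℝ) - 1))

lemma pinchFun_continuous (u : C(X, X)) (v : C(X, B)) :
    Continuous (pinchFun (x₀ := x₀) (b₀ := b₀) u v) := by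
  apply Continuous.if_le
  · exact continuous_quot_mk.comp
      ((Wedge.inl.continuous.comp (u.continuous.comp continuous_fst)).prodMk
      (continuous_toI.comp (by fun_prop)))
  · exact continuous_quot_mk.comp
      ((Wedge.inr.continuous.comp (v.continuous.comp continuous_fst)).prodMk
      (continuous_toI.comp (by fun_prop)))
  · fun_prop
  · exact continuous_const
  · intro p hp
    have h2 : (2 : ℝ) * (p.2 : ℝ) = 1 := by rw [hp]; norm_num
    rw [h2]
    rw [toI_one, Susp.mk_one_pt, show (1 : ℝ) - 1 = 0 by norm_num, toI_zero, Susp.mk_zero_pt]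

lemma pinchFun_zero (u : C(X, X)) (v : C(X, B)) (x : X) :
    pinchFun (x₀ := x₀) (b₀ := b₀) u v (x, 0) = Susp.pt Wedge.pt := by
  simp only [pinchFun, Set.Icc.coe_zero, mul_zero]
  rw [if_pos (by norm_num), toI_zero, Susp.mk_zero_pt]

lemma pinchFun_one (u : C(X, X)) (v : C(X, B)) (x : X) :
    pinchFun (x₀ := x₀) (b₀ := b₀) u v (x, 1) = Susp.pt Wedge.pt := by
  simp only [pinchFun, Set.Icc.coe_one, mul_one]
  rw [if_neg (by norm_num), show (2 : ℝ) - 1 = 1 by norm_num, toI_one, Susp.mk_one_pt]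

lemma pinchFun_base (u : C(X, X)) (v : C(X, B)) (hu : u x₀ = x₀) (hv : v x₀ = b₀) (t : I) :
    pinchFun (x₀ := x₀) (b₀ := b₀) u v (x₀, t) = Susp.pt Wedge.pt := by
  simp only [pinchFun]
  split
  · rw [hu, Wedge.inl_base, Susp.mk_base_pt]
  · rw [hv, Wedge.inr_base, Susp.mk_base_pt]

lemma pinchFun_inv (u : C(X, X)) (v : C(X, B)) (hu : u x₀ = x₀) (hv : v x₀ = b₀) :
    ∀ p q : X × I, SuspRel X x₀ p q →
      pinchFun (x₀ := x₀) (b₀ := b₀) u v p = pinchFun u v q := by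
  rintro p q (⟨x, y⟩ | ⟨x, y⟩ | ⟨s⟩)
  · rw [pinchFun_zero, pinchFun_zero]
  · rw [pinchFun_one, pinchFun_one]
  · rw [pinchFun_base u v hu hv, pinchFun_zero]

/-- The pinch comultiplication followed by `Σu ∨ Σv`, as a map `ΣX → Σ(X ∨ B)`. -/
noncomputable def pinch (u : C(X, X)) (v : C(X, B)) (hu : u x₀ = x₀) (hv : v x₀ = b₀) :
    C(Susp X x₀, Susp (Wedge X B x₀ b₀) Wedge.pt) :=
  ⟨Quot.lift (pinchFun u v) (pinchFun_inv u v hu hv),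
    continuous_quot_lift _ (pinchFun_continuous u v)⟩

lemma pinch_mk (u : C(X, X)) (v : C(X, B)) (hu : u x₀ = x₀) (hv : v x₀ = b₀) (x : X) (t : I) :
    pinch u v hu hv (Susp.mk x₀ x t) = pinchFun u v (x, t) := rfl

end WedgeAux

section PhiAux

variable {X B : Type*} [TopologicalSpace X] [TopologicalSpace B] {x₀ : X} {b₀ : B}

open scoped Classical in
/-- The branch-dependent time-reparametrization on the suspension of a wedge. -/
noncomputable def phi {Z : Type*} (T₁ T₂ : Z → I) :
    Z × Wedge X B x₀ b₀ → Susp (Wedge X B x₀ b₀) Wedge.pt := fun zw =>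
  if zw.2.1.2 = b₀ then Susp.mk Wedge.pt zw.2 (T₁ zw.1) else Susp.mk Wedge.pt zw.2 (T₂ zw.1)

open scoped Classical in
lemma phi_apply {Z : Type*} (T₁ T₂ : Z → I) (z : Z) (w : Wedge X B x₀ b₀) :
    phi T₁ T₂ (z, w) =
      if w.1.2 = b₀ then Susp.mk Wedge.pt w (T₁ z) else Susp.mk Wedge.pt w (T₂ z) := rfl

/-- The key point-set fact: `phi` is continuous, even though its branch condition is not a
topologically nice set, because the discrepancy happens inside the collapsed part of the
suspension. -/
lemma continuous_phi {Z : Type*} [TopologicalSpace Z] {T₁ T₂ : Z → I}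
    (hT₁ : Continuous T₁) (hT₂ : Continuous T₂) :
    Continuous (phi (x₀ := x₀) (b₀ := b₀) T₁ T₂) := by
  classical
  rw [continuous_iff_continuousAt]
  rintro ⟨z₀, w₀⟩
  rw [ContinuousAt, Filter.tendsto_def]
  intro U hU
  obtain ⟨O, hOU, hO, hfO⟩ := mem_nhds_iff.mp hU
  set S : Set (Wedge X B x₀ b₀ × I) := (Quot.mk (SuspRel _ Wedge.pt)) ⁻¹' O with hSdef
  have hSopen : IsOpen S := hO.preimage continuous_quot_mk
  have hmem : ∀ (w : Wedge X B x₀ b₀) (t : I), (w, t) ∈ S ↔ Susp.mk Wedge.pt w t ∈ O :=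
    fun _ _ => Iff.rfl
  -- saturation around the basepoint
  have hsat : Susp.pt Wedge.pt ∈ O → ∀ (w : Wedge X B x₀ b₀) (t : I),
      w = Wedge.pt ∨ t = 0 ∨ t = 1 → (w, t) ∈ S := by
    rintro hpt w t (rfl | rfl | rfl)
    · rw [hmem, Susp.mk_base_pt]; exact hpt
    · rw [hmem, Susp.mk_zero_pt]; exact hpt
    · rw [hmem, Susp.mk_one_pt]; exact hpt
  -- if the basepoint class meets `O`, get a tube
  have tube : Susp.pt Wedge.pt ∈ O → ∃ u : Set (Wedge X B x₀ b₀), IsOpen u ∧ Wedge.pt ∈ u ∧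
      ∀ w ∈ u, ∀ t : I, (w, t) ∈ S := by
    intro hpt
    have hsub : ({Wedge.pt} : Set (Wedge X B x₀ b₀)) ×ˢ (Set.univ : Set I) ⊆ S := by
      rintro ⟨w, t⟩ ⟨hw, -⟩
      exact hsat hpt w t (Or.inl (by simpa using hw))
    obtain ⟨u, v, hu, hv, hptu, huniv, huv⟩ :=
      generalized_tube_lemma isCompact_singleton isCompact_univ hSopen hsub
    exact ⟨u, hu, hptu rfl, fun w hw t => huv ⟨hw, huniv trivial⟩⟩
  -- extract an open box inside an open neighbourhood of the wedge basepoint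
  have box : ∀ u : Set (Wedge X B x₀ b₀), IsOpen u → Wedge.pt ∈ u →
      ∃ (Va : Set X) (Vb : Set B), IsOpen Va ∧ IsOpen Vb ∧ x₀ ∈ Va ∧ b₀ ∈ Vb ∧
        ∀ w : Wedge X B x₀ b₀, w.1.1 ∈ Va → w.1.2 ∈ Vb → w ∈ u := by
    intro u hu hptu
    obtain ⟨u', hu', rfl⟩ := isOpen_induced_iff.mp hu
    have hmem' : u' ∈ nhds ((x₀, b₀) : X × B) := hu'.mem_nhds hptu
    obtain ⟨Va, Vb, hao, hax, hbo, hbb, hsub⟩ := mem_nhds_prod_iff'.mp hmem'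
    exact ⟨Va, Vb, hao, hbo, hax, hbb, fun w h1 h2 => hsub ⟨h1, h2⟩⟩
  -- if `w₀.1` is in the closure of the basepoint, every open nbhd of `w₀` contains the basepoint
  have hclpt : w₀.1 ∈ closure ({((x₀, b₀) : X × B)} : Set (X × B)) →
      ∀ V : Set (Wedge X B x₀ b₀), IsOpen V → w₀ ∈ V → Wedge.pt ∈ V := by
    intro hcl V hV hwV
    obtain ⟨V', hV', rfl⟩ := isOpen_induced_iff.mp hV
    obtain ⟨p, hpV, hp⟩ := mem_closure_iff.mp hcl V' hV' hwV
    rcases hp with rfl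
    exact hpV
  by_cases hb : w₀.1.2 = b₀
  · have hval : (w₀, T₁ z₀) ∈ S := by
      rw [hmem]
      rw [phi_apply, if_pos hb] at hfO
      exact hfO
    have hT₁slice : IsOpen {w : Wedge X B x₀ b₀ | (w, T₁ z₀) ∈ S} :=
      hSopen.preimage (continuous_id.prodMk continuous_const)
    by_cases hcl : w₀.1.1 ∈ closure ({x₀} : Set X)
    · -- near the basepoint: use the tube
      have hclw : w₀.1 ∈ closure ({((x₀, b₀) : X × B)} : Set (X × B)) := by
        rw [← Set.singleton_prod_singleton, closure_prod_eq]
        exact ⟨hcl, by rw [hb]; exact subset_closure rfl⟩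
      have hptO : Susp.pt Wedge.pt ∈ O := by
        have hptS : (Wedge.pt, T₁ z₀) ∈ S := hclpt hclw _ hT₁slice hval
        rw [hmem, Susp.mk_base_pt] at hptS
        exact hptS
      obtain ⟨u, hu, hptu, htube⟩ := tube hptO
      obtain ⟨Va, Vb, hVa, hVb, hx₀a, hb₀b, hbox⟩ := box u hu hptu
      refine mem_nhds_iff.mpr ⟨{zw | (zw.2, T₁ zw.1) ∈ S} ∩ {zw | zw.2.1.2 ∈ Vb}, ?_, ?_, ?_⟩
      · rintro ⟨z, w⟩ ⟨hzw1, hzw2⟩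
        by_cases hwb : w.1.2 = b₀
        · show phi T₁ T₂ (z, w) ∈ U
          rw [phi_apply, if_pos hwb]
          exact hOU hzw1
        · show phi T₁ T₂ (z, w) ∈ U
          rw [phi_apply, if_neg hwb]
          have hwx : w.1.1 = x₀ := w.2.resolve_right hwb
          exact hOU ((hmem _ _).mp (htube w (hbox w (by rw [hwx]; exact hx₀a) hzw2) (T₂ z)))
      · exact (hSopen.preimage ((continuous_snd.prodMk (hT₁.comp continuous_fst)))).inter
          (hVb.preimage (by fun_prop))
      · exact ⟨hval, by show w₀.1.2 ∈ Vb; rw [hb]; exact hb₀b⟩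
    · -- away from the basepoint: a purely `X`-branch neighbourhood
      refine mem_nhds_iff.mpr
        ⟨{zw | (zw.2, T₁ zw.1) ∈ S} ∩ {zw | zw.2.1.1 ∈ (closure ({x₀} : Set X))ᶜ}, ?_, ?_, ?_⟩
      · rintro ⟨z, w⟩ ⟨hzw1, hzw2⟩
        have hwb : w.1.2 = b₀ :=
          w.2.resolve_left (fun hx => hzw2 (by rw [hx]; exact subset_closure rfl))
        show phi T₁ T₂ (z, w) ∈ U
        rw [phi_apply, if_pos hwb]
        exact hOU hzw1
      · exact (hSopen.preimage ((continuous_snd.prodMk (hT₁.comp continuous_fst)))).inter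
          (isClosed_closure.isOpen_compl.preimage (by fun_prop))
      · exact ⟨hval, hcl⟩
  · have hwx : w₀.1.1 = x₀ := w₀.2.resolve_right hb
    have hval : (w₀, T₂ z₀) ∈ S := by
      rw [hmem]
      rw [phi_apply, if_neg hb] at hfO
      exact hfO
    have hT₂slice : IsOpen {w : Wedge X B x₀ b₀ | (w, T₂ z₀) ∈ S} :=
      hSopen.preimage (continuous_id.prodMk continuous_const)
    by_cases hcl : w₀.1.2 ∈ closure ({b₀} : Set B)
    · have hclw : w₀.1 ∈ closure ({((x₀, b₀) : X × B)} : Set (X × B)) := by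
        rw [← Set.singleton_prod_singleton, closure_prod_eq]
        exact ⟨by rw [hwx]; exact subset_closure rfl, hcl⟩
      have hptO : Susp.pt Wedge.pt ∈ O := by
        have hptS : (Wedge.pt, T₂ z₀) ∈ S := hclpt hclw _ hT₂slice hval
        rw [hmem, Susp.mk_base_pt] at hptS
        exact hptS
      obtain ⟨u, hu, hptu, htube⟩ := tube hptO
      obtain ⟨Va, Vb, hVa, hVb, hx₀a, hb₀b, hbox⟩ := box u hu hptu
      refine mem_nhds_iff.mpr ⟨{zw | (zw.2, T₂ zw.1) ∈ S} ∩ {zw | zw.2.1.1 ∈ Va}, ?_, ?_, ?_⟩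
      · rintro ⟨z, w⟩ ⟨hzw1, hzw2⟩
        by_cases hwb : w.1.2 = b₀
        · show phi T₁ T₂ (z, w) ∈ U
          rw [phi_apply, if_pos hwb]
          exact hOU ((hmem _ _).mp (htube w (hbox w hzw2 (by rw [hwb]; exact hb₀b)) (T₁ z)))
        · show phi T₁ T₂ (z, w) ∈ U
          rw [phi_apply, if_neg hwb]
          exact hOU hzw1
      · exact (hSopen.preimage ((continuous_snd.prodMk (hT₂.comp continuous_fst)))).inter
          (hVa.preimage (by fun_prop))
      · exact ⟨hval, by show w₀.1.1 ∈ Va; rw [hwx]; exact hx₀a⟩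
    · refine mem_nhds_iff.mpr
        ⟨{zw | (zw.2, T₂ zw.1) ∈ S} ∩ {zw | zw.2.1.2 ∈ (closure ({b₀} : Set B))ᶜ}, ?_, ?_, ?_⟩
      · rintro ⟨z, w⟩ ⟨hzw1, hzw2⟩
        have hwb : w.1.2 ≠ b₀ := fun hx => hzw2 (by rw [hx]; exact subset_closure rfl)
        show phi T₁ T₂ (z, w) ∈ U
        rw [phi_apply, if_neg hwb]
        exact hOU hzw1
      · exact (hSopen.preimage ((continuous_snd.prodMk (hT₂.comp continuous_fst)))).inter
          (isClosed_closure.isOpen_compl.preimage (by fun_prop))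
      · exact ⟨hval, hcl⟩

end PhiAux

section StepsAux

variable {X B : Type*} [TopologicalSpace X] [TopologicalSpace B] {x₀ : X} {b₀ : B}

/-- Step 1: the suspension of a map into a wedge is homotopic rel basepoint to the pinch map
built from its two components. -/
lemma susp_homotopic_pinch (G : C(X, Wedge X B x₀ b₀)) (hGpt : G x₀ = Wedge.pt)
    (hu : (Wedge.p₁.comp G) x₀ = x₀) (hv : (Wedge.p₂.comp G) x₀ = b₀)
    (SuspG : C(Susp X x₀, Susp (Wedge X B x₀ b₀) Wedge.pt))
    (hSuspG : ∀ (x : X) (t : I), SuspG (Susp.mk x₀ x t) = Susp.mk Wedge.pt (G x) t) :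
    SuspG.HomotopicRel (pinch (Wedge.p₁.comp G) (Wedge.p₂.comp G) hu hv) {Susp.pt x₀} := by
  classical
  set T₁ : I × I → I := fun z => toI ((1 + (z.1 : ℝ)) * (z.2 : ℝ)) with hT₁def
  set T₂ : I × I → I := fun z => toI ((1 + (z.1 : ℝ)) * (z.2 : ℝ) - (z.1 : ℝ)) with hT₂def
  have hT₁ : Continuous T₁ := continuous_toI.comp (by fun_prop)
  have hT₂ : Continuous T₂ := continuous_toI.comp (by fun_prop)
  set h : I × (X × I) → Susp (Wedge X B x₀ b₀) Wedge.pt :=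
    fun p => phi T₁ T₂ ((p.1, p.2.2), G p.2.1) with hhdef
  have hcont : Continuous h :=
    (continuous_phi hT₁ hT₂).comp
      (((continuous_fst.prodMk (continuous_snd.comp continuous_snd))).prodMk
        (G.continuous.comp (continuous_fst.comp continuous_snd)))
  have hT₁0 : ∀ s : I, T₁ (s, 0) = 0 := by
    intro s
    show toI ((1 + (s : ℝ)) * ((0 : I) : ℝ)) = 0
    rw [Set.Icc.coe_zero, mul_zero, toI_zero]
  have hT₂0 : ∀ s : I, T₂ (s, 0) = 0 := by
    intro s
    show toI ((1 + (s : ℝ)) * ((0 : I) : ℝ) - (s : ℝ)) = 0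
    rw [Set.Icc.coe_zero, mul_zero, zero_sub]
    exact toI_nonpos (by simpa using s.2.1)
  have hT₁1 : ∀ s : I, T₁ (s, 1) = 1 := by
    intro s
    show toI ((1 + (s : ℝ)) * ((1 : I) : ℝ)) = 1
    rw [Set.Icc.coe_one, mul_one]
    exact toI_ge_one (by simpa using s.2.1)
  have hT₂1 : ∀ s : I, T₂ (s, 1) = 1 := by
    intro s
    show toI ((1 + (s : ℝ)) * ((1 : I) : ℝ) - (s : ℝ)) = 1
    rw [Set.Icc.coe_one, mul_one, add_sub_cancel_right, toI_one]
  have hbase : ∀ (s : I) (t : I), h (s, (x₀, t)) = Susp.pt Wedge.pt := by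
    intro s t
    show phi T₁ T₂ ((s, t), G x₀) = Susp.pt Wedge.pt
    rw [hGpt, phi_apply, if_pos (show (Wedge.pt : Wedge X B x₀ b₀).1.2 = b₀ from rfl), Susp.mk_base_pt]
  have hzero : ∀ (s : I) (x : X), h (s, (x, 0)) = Susp.pt Wedge.pt := by
    intro s x
    show phi T₁ T₂ ((s, 0), G x) = Susp.pt Wedge.pt
    rw [phi_apply]
    split
    · rw [hT₁0, Susp.mk_zero_pt]
    · rw [hT₂0, Susp.mk_zero_pt]
  have hone : ∀ (s : I) (x : X), h (s, (x, 1)) = Susp.pt Wedge.pt := by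
    intro s x
    show phi T₁ T₂ ((s, 1), G x) = Susp.pt Wedge.pt
    rw [phi_apply]
    split
    · rw [hT₁1, Susp.mk_one_pt]
    · rw [hT₂1, Susp.mk_one_pt]
  have hinv : ∀ (s : I) (p q : X × I), SuspRel X x₀ p q → h (s, p) = h (s, q) := by
    rintro s p q (⟨x, y⟩ | ⟨x, y⟩ | ⟨t⟩)
    · rw [hzero, hzero]
    · rw [hone, hone]
    · rw [hbase, hbase]
  refine ⟨⟨⟨suspDescend x₀ ⟨h, hcont⟩ hinv, ?_, ?_⟩, ?_⟩⟩
  · refine Quot.ind ?_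
    rintro ⟨x, t⟩
    show h (0, (x, t)) = SuspG (Susp.mk x₀ x t)
    rw [hSuspG]
    show phi T₁ T₂ ((0, t), G x) = Susp.mk Wedge.pt (G x) t
    have e₁ : T₁ (0, t) = t := by
      show toI ((1 + ((0 : I) : ℝ)) * (t : ℝ)) = t
      rw [Set.Icc.coe_zero, add_zero, one_mul, toI_coe]
    have e₂ : T₂ (0, t) = t := by
      show toI ((1 + ((0 : I) : ℝ)) * (t : ℝ) - ((0 : I) : ℝ)) = t
      rw [Set.Icc.coe_zero, add_zero, one_mul, sub_zero, toI_coe]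
    rw [phi_apply]
    split
    · rw [e₁]
    · rw [e₂]
  · refine Quot.ind ?_
    rintro ⟨x, t⟩
    show h (1, (x, t)) = pinch (Wedge.p₁.comp G) (Wedge.p₂.comp G) hu hv (Susp.mk x₀ x t)
    rw [pinch_mk]
    show phi T₁ T₂ ((1, t), G x) = pinchFun (Wedge.p₁.comp G) (Wedge.p₂.comp G) (x, t)
    have e₁ : T₁ (1, t) = toI (2 * (t : ℝ)) := by
      show toI ((1 + ((1 : I) : ℝ)) * (t : ℝ)) = toI (2 * (t : ℝ))
      norm_num
    have e₂ : T₂ (1, t) = toI (2 * (t : ℝ) - 1) := by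
      show toI ((1 + ((1 : I) : ℝ)) * (t : ℝ) - ((1 : I) : ℝ)) = toI (2 * (t : ℝ) - 1)
      norm_num
    rw [phi_apply]
    simp only [pinchFun]
    by_cases hb : (G x).1.2 = b₀
    · rw [if_pos hb, e₁]
      by_cases ht : (t : ℝ) ≤ 1 / 2
      · rw [if_pos ht]
        congr 1
        exact Subtype.ext (Prod.ext rfl hb)
      · rw [if_neg ht]
        rw [toI_ge_one (by push_neg at ht; linarith), Susp.mk_one_pt]
        have hb' : (Wedge.p₂.comp G) x = b₀ := hb
        rw [hb', Wedge.inr_base, Susp.mk_base_pt]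
    · rw [if_neg hb, e₂]
      have hx : (G x).1.1 = x₀ := (G x).2.resolve_right hb
      have hx' : (Wedge.p₁.comp G) x = x₀ := hx
      by_cases ht : (t : ℝ) ≤ 1 / 2
      · rw [if_pos ht]
        rw [toI_nonpos (by linarith), Susp.mk_zero_pt]
        rw [hx', Wedge.inl_base, Susp.mk_base_pt]
      · rw [if_neg ht]
        congr 1
        exact Subtype.ext (Prod.ext hx rfl)
  · intro s z hz
    rcases hz with rfl
    show h (s, (x₀, 0)) = SuspG (Susp.pt x₀)
    rw [hbase, show Susp.pt x₀ = Susp.mk x₀ x₀ 0 from rfl, hSuspG, hGpt, Susp.mk_zero_pt]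

/-- Step 2: pinch maps built from homotopic-rel-basepoint data are homotopic rel basepoint. -/
lemma pinch_homotopic_rel {u u' : C(X, X)} {v v' : C(X, B)}
    (hu : u x₀ = x₀) (hu' : u' x₀ = x₀) (hv : v x₀ = b₀) (hv' : v' x₀ = b₀)
    (hF : u.HomotopicRel u' {x₀}) (hE : v.HomotopicRel v' {x₀}) :
    (pinch (x₀ := x₀) (b₀ := b₀) u v hu hv).HomotopicRel (pinch u' v' hu' hv')
      {Susp.pt x₀} := by
  obtain ⟨F⟩ := hF
  obtain ⟨E⟩ := hE
  set h : I × (X × I) → Susp (Wedge X B x₀ b₀) Wedge.pt := fun p =>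
    if ((p.2.2 : ℝ)) ≤ 1 / 2 then
      Susp.mk Wedge.pt (Wedge.inl (F (p.1, p.2.1))) (toI (2 * (p.2.2 : ℝ)))
    else Susp.mk Wedge.pt (Wedge.inr (E (p.1, p.2.1))) (toI (2 * (p.2.2 : ℝ) - 1)) with hhdef
  have hcont : Continuous h := by
    apply Continuous.if_le
    · exact continuous_quot_mk.comp
        ((Wedge.inl.continuous.comp (F.continuous.comp (by fun_prop))).prodMk
          (continuous_toI.comp (by fun_prop)))
    · exact continuous_quot_mk.comp
        ((Wedge.inr.continuous.comp (E.continuous.comp (by fun_prop))).prodMk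
          (continuous_toI.comp (by fun_prop)))
    · fun_prop
    · exact continuous_const
    · intro p hp
      have h2 : (2 : ℝ) * (p.2.2 : ℝ) = 1 := by rw [hp]; norm_num
      rw [h2, toI_one, Susp.mk_one_pt, show (1 : ℝ) - 1 = 0 by norm_num, toI_zero,
        Susp.mk_zero_pt]
  have hzero : ∀ (s : I) (x : X), h (s, (x, 0)) = Susp.pt Wedge.pt := by
    intro s x
    simp only [hhdef, Set.Icc.coe_zero, mul_zero]
    rw [if_pos (by norm_num), toI_zero, Susp.mk_zero_pt]
  have hone : ∀ (s : I) (x : X), h (s, (x, 1)) = Susp.pt Wedge.pt := by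
    intro s x
    simp only [hhdef, Set.Icc.coe_one, mul_one]
    rw [if_neg (by norm_num), show (2 : ℝ) - 1 = 1 by norm_num, toI_one, Susp.mk_one_pt]
  have hbase : ∀ (s : I) (t : I), h (s, (x₀, t)) = Susp.pt Wedge.pt := by
    intro s t
    simp only [hhdef]
    split
    · rw [F.eq_fst s rfl, hu, Wedge.inl_base, Susp.mk_base_pt]
    · rw [E.eq_fst s rfl, hv, Wedge.inr_base, Susp.mk_base_pt]
  have hinv : ∀ (s : I) (p q : X × I), SuspRel X x₀ p q → h (s, p) = h (s, q) := by
    rintro s p q (⟨x, y⟩ | ⟨x, y⟩ | ⟨t⟩)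
    · rw [hzero, hzero]
    · rw [hone, hone]
    · rw [hbase, hbase]
  refine ⟨⟨⟨suspDescend x₀ ⟨h, hcont⟩ hinv, ?_, ?_⟩, ?_⟩⟩
  · refine Quot.ind ?_
    rintro ⟨x, t⟩
    show h (0, (x, t)) = pinch u v hu hv (Susp.mk x₀ x t)
    rw [pinch_mk]
    simp only [hhdef, pinchFun, F.apply_zero, E.apply_zero]
  · refine Quot.ind ?_
    rintro ⟨x, t⟩
    show h (1, (x, t)) = pinch u' v' hu' hv' (Susp.mk x₀ x t)
    rw [pinch_mk]
    simp only [hhdef, pinchFun, F.apply_one, E.apply_one]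
  · intro s z hz
    rcases hz with rfl
    show h (s, (x₀, 0)) = pinch u v hu hv (Susp.pt x₀)
    rw [hzero, show Susp.pt x₀ = Susp.mk x₀ x₀ 0 from rfl, pinch_mk, pinchFun_zero]

/-- The suspension of the second wedge inclusion. -/
noncomputable def suspInr : C(Susp B b₀, Susp (Wedge X B x₀ b₀) Wedge.pt) :=
  ⟨Quot.lift (fun p => Susp.mk Wedge.pt (Wedge.inr p.1) p.2) (by
      rintro p q (⟨b, b'⟩ | ⟨b, b'⟩ | ⟨t⟩) <;>
        simp only [Wedge.inr_base, Susp.mk_zero_pt, Susp.mk_one_pt, Susp.mk_base_pt]),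
    continuous_quot_lift _ (continuous_quot_mk.comp
      ((Wedge.inr.continuous.comp continuous_fst).prodMk continuous_snd))⟩

lemma suspInr_mk (b : B) (t : I) :
    (suspInr : C(Susp B b₀, Susp (Wedge X B x₀ b₀) Wedge.pt)) (Susp.mk b₀ b t) =
      Susp.mk Wedge.pt (Wedge.inr b) t := rfl

lemma suspInr_pt :
    (suspInr : C(Susp B b₀, Susp (Wedge X B x₀ b₀) Wedge.pt)) (Susp.pt b₀) =
      Susp.pt Wedge.pt := by
  rw [show Susp.pt b₀ = Susp.mk b₀ b₀ 0 from rfl, suspInr_mk, Susp.mk_zero_pt]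

/-- Step 3: pinch maps whose right-hand data have homotopic suspensions are homotopic. -/
lemma pinch_homotopic_of_susp {g g' : C(X, B)} (hg : g x₀ = b₀) (hg' : g' x₀ = b₀)
    (suspg suspg' : C(Susp X x₀, Susp B b₀))
    (hsuspg : ∀ (x : X) (t : I), suspg (Susp.mk x₀ x t) = Susp.mk b₀ (g x) t)
    (hsuspg' : ∀ (x : X) (t : I), suspg' (Susp.mk x₀ x t) = Susp.mk b₀ (g' x) t)
    (hQ : suspg.HomotopicRel suspg' {Susp.pt x₀}) :
    (pinch (x₀ := x₀) (b₀ := b₀) (ContinuousMap.id X) g rfl hg).HomotopicRel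
      (pinch (ContinuousMap.id X) g' rfl hg') {Susp.pt x₀} := by
  obtain ⟨Q⟩ := hQ
  have hQpt : ∀ s : I, Q (s, Susp.pt x₀) = Susp.pt b₀ := by
    intro s
    rw [Q.eq_fst s rfl, show Susp.pt x₀ = Susp.mk x₀ x₀ 0 from rfl, hsuspg,
      Susp.mk_zero_pt]
  set h : I × (X × I) → Susp (Wedge X B x₀ b₀) Wedge.pt := fun p =>
    if ((p.2.2 : ℝ)) ≤ 1 / 2 then
      Susp.mk Wedge.pt (Wedge.inl p.2.1) (toI (2 * (p.2.2 : ℝ)))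
    else suspInr (Q (p.1, Susp.mk x₀ p.2.1 (toI (2 * (p.2.2 : ℝ) - 1)))) with hhdef
  have hcont : Continuous h := by
    apply Continuous.if_le
    · exact continuous_quot_mk.comp
        ((Wedge.inl.continuous.comp (by fun_prop)).prodMk (continuous_toI.comp (by fun_prop)))
    · refine suspInr.continuous.comp (Q.continuous.comp ?_)
      refine continuous_fst.prodMk (continuous_quot_mk.comp ?_)
      exact (continuous_fst.comp continuous_snd).prodMk (continuous_toI.comp (by fun_prop))
    · fun_prop
    · exact continuous_const
    · intro p hp
      have h2 : (2 : ℝ) * (p.2.2 : ℝ) = 1 := by rw [hp]; norm_num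
      rw [h2, toI_one, Susp.mk_one_pt, show (1 : ℝ) - 1 = 0 by norm_num, toI_zero,
        Susp.mk_zero_pt, hQpt, suspInr_pt]
  have hzero : ∀ (s : I) (x : X), h (s, (x, 0)) = Susp.pt Wedge.pt := by
    intro s x
    simp only [hhdef, Set.Icc.coe_zero, mul_zero]
    rw [if_pos (by norm_num), toI_zero, Susp.mk_zero_pt]
  have hone : ∀ (s : I) (x : X), h (s, (x, 1)) = Susp.pt Wedge.pt := by
    intro s x
    simp only [hhdef, Set.Icc.coe_one, mul_one]
    rw [if_neg (by norm_num), show (2 : ℝ) - 1 = 1 by norm_num, toI_one, Susp.mk_one_pt, hQpt,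
      suspInr_pt]
  have hbase : ∀ (s : I) (t : I), h (s, (x₀, t)) = Susp.pt Wedge.pt := by
    intro s t
    simp only [hhdef]
    split
    · rw [Wedge.inl_base, Susp.mk_base_pt]
    · rw [Susp.mk_base_pt, hQpt, suspInr_pt]
  have hinv : ∀ (s : I) (p q : X × I), SuspRel X x₀ p q → h (s, p) = h (s, q) := by
    rintro s p q (⟨x, y⟩ | ⟨x, y⟩ | ⟨t⟩)
    · rw [hzero, hzero]
    · rw [hone, hone]
    · rw [hbase, hbase]
  refine ⟨⟨⟨suspDescend x₀ ⟨h, hcont⟩ hinv, ?_, ?_⟩, ?_⟩⟩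
  · refine Quot.ind ?_
    rintro ⟨x, t⟩
    show h (0, (x, t)) = pinch (ContinuousMap.id X) g rfl hg (Susp.mk x₀ x t)
    change _ = pinchFun (ContinuousMap.id X) g (x, t)
    simp only [hhdef, pinchFun, ContinuousMap.id_apply]
    split
    · rfl
    · rw [Q.apply_zero, hsuspg, suspInr_mk]
  · refine Quot.ind ?_
    rintro ⟨x, t⟩
    show h (1, (x, t)) = pinch (ContinuousMap.id X) g' rfl hg' (Susp.mk x₀ x t)
    change _ = pinchFun (ContinuousMap.id X) g' (x, t)
    simp only [hhdef, pinchFun, ContinuousMap.id_apply]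
    split
    · rfl
    · rw [Q.apply_one, hsuspg', suspInr_mk]
  · intro s z hz
    rcases hz with rfl
    show h (s, (x₀, 0)) = pinch (ContinuousMap.id X) g rfl hg (Susp.pt x₀)
    rw [hzero]
    exact (pinchFun_zero (ContinuousMap.id X) g x₀).symm

end StepsAux

/-- If `G` is a `g`-coaction then `λ' ∘ (SuspG) ≃ (id ∨ suspg) ∘ ν : ΣX → ΣX ∨ ΣB`
(based homotopy), where `λ' : Σ(X ∨ B) → ΣX ∨ ΣB` is the canonical homeomorphism
and `ν` the pinch comultiplication on `ΣX`; the map `c = (id ∨ suspg) ∘ ν` is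
characterized by its pointwise formula.  Consequently, if `G'` is a `g'`-coaction
with `suspg ≃ suspg'`, then `SuspG ≃ SuspG'`. -/
theorem susp_coaction {X B : Type*} [TopologicalSpace X] [TopologicalSpace B]
    (x₀ : X) (b₀ : B)
    (G : C(X, Wedge X B x₀ b₀)) (g : C(X, B)) (hG : IsCoaction x₀ b₀ G g)
    (G' : C(X, Wedge X B x₀ b₀)) (g' : C(X, B)) (hG' : IsCoaction x₀ b₀ G' g')
    (SuspG : C(Susp X x₀, Susp (Wedge X B x₀ b₀) Wedge.pt))
    (hSuspG : ∀ (x : X) (t : I), SuspG (Susp.mk x₀ x t) = Susp.mk Wedge.pt (G x) t)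
    (SuspG' : C(Susp X x₀, Susp (Wedge X B x₀ b₀) Wedge.pt))
    (hSuspG' : ∀ (x : X) (t : I), SuspG' (Susp.mk x₀ x t) = Susp.mk Wedge.pt (G' x) t)
    (suspg : C(Susp X x₀, Susp B b₀))
    (hsuspg : ∀ (x : X) (t : I), suspg (Susp.mk x₀ x t) = Susp.mk b₀ (g x) t)
    (suspg' : C(Susp X x₀, Susp B b₀))
    (hsuspg' : ∀ (x : X) (t : I), suspg' (Susp.mk x₀ x t) = Susp.mk b₀ (g' x) t)
    (lam : C(Susp (Wedge X B x₀ b₀) Wedge.pt,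
      Wedge (Susp X x₀) (Susp B b₀) (Susp.pt x₀) (Susp.pt b₀)))
    (hlam₁ : ∀ (x : X) (t : I),
      lam (Susp.mk Wedge.pt (Wedge.inl x) t) = Wedge.inl (Susp.mk x₀ x t))
    (hlam₂ : ∀ (b : B) (t : I),
      lam (Susp.mk Wedge.pt (Wedge.inr b) t) = Wedge.inr (Susp.mk b₀ b t))
    (c : C(Susp X x₀, Wedge (Susp X x₀) (Susp B b₀) (Susp.pt x₀) (Susp.pt b₀)))
    (hc : ∀ (x : X) (t : I), c (Susp.mk x₀ x t) =
      if (t : ℝ) ≤ 1 / 2 then Wedge.inl (Susp.mk x₀ x (toI (2 * (t : ℝ))))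
      else Wedge.inr (Susp.mk b₀ (g x) (toI (2 * (t : ℝ) - 1))))
    (hgg' : suspg.HomotopicRel suspg' {Susp.pt x₀}) :
    (lam.comp SuspG).HomotopicRel c {Susp.pt x₀} ∧
    SuspG.HomotopicRel SuspG' {Susp.pt x₀} := by
  -- Derive basedness of the various maps from the pointwise descriptions of their suspensions.
  have hgx : g x₀ = b₀ := by
    have h13 := hsuspg x₀ ⟨1/3, Set.mem_Icc.mpr (by norm_num)⟩
    have h12 := hsuspg x₀ ⟨1/2, Set.mem_Icc.mpr (by norm_num)⟩
    rw [Susp.mk_base_pt] at h13 h12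
    exact Susp.eq_base_of_mk_eq b₀ (by norm_num) (by norm_num) (by norm_num) (by norm_num)
      (by norm_num) (h13.symm.trans h12)
  have hgx' : g' x₀ = b₀ := by
    have h13 := hsuspg' x₀ ⟨1/3, Set.mem_Icc.mpr (by norm_num)⟩
    have h12 := hsuspg' x₀ ⟨1/2, Set.mem_Icc.mpr (by norm_num)⟩
    rw [Susp.mk_base_pt] at h13 h12
    exact Susp.eq_base_of_mk_eq b₀ (by norm_num) (by norm_num) (by norm_num) (by norm_num)
      (by norm_num) (h13.symm.trans h12)
  have hGpt : G x₀ = Wedge.pt := by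
    have h13 := hSuspG x₀ ⟨1/3, Set.mem_Icc.mpr (by norm_num)⟩
    have h12 := hSuspG x₀ ⟨1/2, Set.mem_Icc.mpr (by norm_num)⟩
    rw [Susp.mk_base_pt] at h13 h12
    exact Susp.eq_base_of_mk_eq Wedge.pt (by norm_num) (by norm_num) (by norm_num) (by norm_num)
      (by norm_num) (h13.symm.trans h12)
  have hGpt' : G' x₀ = Wedge.pt := by
    have h13 := hSuspG' x₀ ⟨1/3, Set.mem_Icc.mpr (by norm_num)⟩
    have h12 := hSuspG' x₀ ⟨1/2, Set.mem_Icc.mpr (by norm_num)⟩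
    rw [Susp.mk_base_pt] at h13 h12
    exact Susp.eq_base_of_mk_eq Wedge.pt (by norm_num) (by norm_num) (by norm_num) (by norm_num)
      (by norm_num) (h13.symm.trans h12)
  have hu : (Wedge.p₁.comp G) x₀ = x₀ := by rw [ContinuousMap.comp_apply, hGpt]; rfl
  have hv : (Wedge.p₂.comp G) x₀ = b₀ := by rw [ContinuousMap.comp_apply, hGpt]; rfl
  have hu' : (Wedge.p₁.comp G') x₀ = x₀ := by rw [ContinuousMap.comp_apply, hGpt']; rfl
  have hv' : (Wedge.p₂.comp G') x₀ = b₀ := by rw [ContinuousMap.comp_apply, hGpt']; rfl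
  have s1 := susp_homotopic_pinch G hGpt hu hv SuspG hSuspG
  have s1' := susp_homotopic_pinch G' hGpt' hu' hv' SuspG' hSuspG'
  have s2 : (pinch (Wedge.p₁.comp G) (Wedge.p₂.comp G) hu hv).HomotopicRel
      (pinch (ContinuousMap.id X) g rfl hgx) {Susp.pt x₀} :=
    pinch_homotopic_rel hu rfl hv hgx hG.1 hG.2
  have s2' : (pinch (Wedge.p₁.comp G') (Wedge.p₂.comp G') hu' hv').HomotopicRel
      (pinch (ContinuousMap.id X) g' rfl hgx') {Susp.pt x₀} :=
    pinch_homotopic_rel hu' rfl hv' hgx' hG'.1 hG'.2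
  have s3 := pinch_homotopic_of_susp hgx hgx' suspg suspg' hsuspg hsuspg' hgg'
  have main2 : SuspG.HomotopicRel SuspG' {Susp.pt x₀} :=
    ((((s1.trans s2).trans s3).trans s2'.symm).trans s1'.symm)
  have h12 := s1.trans s2
  obtain ⟨R⟩ := h12
  have hceq : lam.comp (pinch (ContinuousMap.id X) g rfl hgx) = c := by
    apply ContinuousMap.ext
    refine Quot.ind ?_
    rintro ⟨x, t⟩
    show lam (pinch (ContinuousMap.id X) g rfl hgx (Susp.mk x₀ x t)) = c (Susp.mk x₀ x t)
    change lam (pinchFun (ContinuousMap.id X) g (x, t)) = _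
    rw [pinchFun, hc]
    by_cases ht : (t : ℝ) ≤ 1 / 2
    · rw [if_pos ht, if_pos ht, hlam₁]
      rfl
    · rw [if_neg ht, if_neg ht, hlam₂]
  constructor
  · rw [← hceq]
    exact ⟨R.compContinuousMap lam⟩
  · exact main2
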